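/- Let L be a Lie superalgebra over a field of characteristic ≠ 2 with L = [L,L] and Z_L(L') = {0} (where L' = [L,L]). Then every even linear super-commuting map f : L → L lies in the even part of the centroid: f([x,y]) = [x, f(y)] for all x, y ∈ L. -/
import Mathlib


/-- The sign `(-1)^(i*j)` for degrees `i j : ZMod 2`, as an element of the field `F`. -/
def ssign (F : Type*) [Field F] (i j : ZMod 2) : F :=
  if i * j = 1 then -1 else 1

/-- A Lie superalgebra structure on an `F`-module `L`: a bilinear bracket together with a
`ZMod 2`-grading by submodules, such that the bracket is graded, super-skewsymmetric and
satisfies the super Jacobi identity on homogeneous elements. -/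
structure LieSuperAlg (F : Type*) [Field F] (L : Type*) [AddCommGroup L] [Module F L] where
  br : L → L → L
  br_add_left : ∀ x y z : L, br (x + y) z = br x z + br y z
  br_smul_left : ∀ (c : F) (x z : L), br (c • x) z = c • br x z
  br_add_right : ∀ x y z : L, br x (y + z) = br x y + br x z
  br_smul_right : ∀ (c : F) (x z : L), br x (c • z) = c • br x z
  G : ZMod 2 → Submodule F L
  isInternal : DirectSum.IsInternal G
  br_deg : ∀ {i j : ZMod 2} {x y : L}, x ∈ G i → y ∈ G j → br x y ∈ G (i + j)
  super_skew : ∀ {i j : ZMod 2} {x y : L}, x ∈ G i → y ∈ G j →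
    br x y = -(ssign F i j • br y x)
  super_jacobi : ∀ {i j k : ZMod 2} {x y z : L}, x ∈ G i → y ∈ G j → z ∈ G k →
    br x (br y z) = br (br x y) z + ssign F i j • br y (br x z)

variable {F : Type*} [Field F] {L : Type*} [AddCommGroup L] [Module F L]

/-- `δ : L × L → L` is a super-biderivation of degree `τ`. -/
structure IsSuperBiderivation (A : LieSuperAlg F L) (τ : ZMod 2) (δ : L → L → L) : Prop where
  add_left : ∀ x y z : L, δ (x + y) z = δ x z + δ y z
  smul_left : ∀ (c : F) (x z : L), δ (c • x) z = c • δ x z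
  add_right : ∀ x y z : L, δ x (y + z) = δ x y + δ x z
  smul_right : ∀ (c : F) (x z : L), δ x (c • z) = c • δ x z
  deg : ∀ {i j : ZMod 2} {x y : L}, x ∈ A.G i → y ∈ A.G j → δ x y ∈ A.G (i + j + τ)
  skew : ∀ {i j : ZMod 2} {x y : L}, x ∈ A.G i → y ∈ A.G j →
    δ x y = -(ssign F i j • δ y x)
  leibniz : ∀ {i j k : ZMod 2} {x y z : L}, x ∈ A.G i → y ∈ A.G j → z ∈ A.G k →
    δ (A.br x y) z = ssign F τ i • A.br x (δ y z) + ssign F j k • A.br (δ x z) y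

/-- `f : L → L` is an even linear super-commuting map. -/
structure IsSuperCommuting (A : LieSuperAlg F L) (f : L → L) : Prop where
  map_add : ∀ x y : L, f (x + y) = f x + f y
  map_smul : ∀ (c : F) (x : L), f (c • x) = c • f x
  even : ∀ {i : ZMod 2} {x : L}, x ∈ A.G i → f x ∈ A.G i
  comm : ∀ x y : L, A.br (f x) y = A.br x (f y)

/-- `γ : L → L` is a homogeneous element of the centroid `Γ(L)`, of degree `τ`. -/
structure InCentroid (A : LieSuperAlg F L) (τ : ZMod 2) (γ : L → L) : Prop where
  map_add : ∀ x y : L, γ (x + y) = γ x + γ y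
  map_smul : ∀ (c : F) (x : L), γ (c • x) = c • γ x
  deg : ∀ {i : ZMod 2} {x : L}, x ∈ A.G i → γ x ∈ A.G (i + τ)
  centroid : ∀ {i j : ZMod 2} {x y : L}, x ∈ A.G i → y ∈ A.G j →
    γ (A.br x y) = ssign F τ i • A.br x (γ y)

/-- The derived subalgebra `L' = [L, L]`, the span of all brackets. -/
def derived (A : LieSuperAlg F L) : Submodule F L :=
  Submodule.span F {z : L | ∃ x y : L, z = A.br x y}

/-- The center `Z(L)` as a submodule. -/
def centerSub (A : LieSuperAlg F L) : Submodule F L where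
  carrier := {v : L | ∀ x : L, A.br x v = 0}
  add_mem' := by
    intro a b ha hb x
    rw [A.br_add_right, ha x, hb x, add_zero]
  zero_mem' := by
    intro x
    simpa using A.br_smul_right (0 : F) x 0
  smul_mem' := by
    intro c a ha x
    rw [A.br_smul_right, ha x, smul_zero]

section signs
private lemma zc : ∀ i : ZMod 2, i = 0 ∨ i = 1 := by decide

private lemma z2add : (1 + 1 : ZMod 2) = 0 := by decide

private lemma ssign00 : ssign F 0 0 = 1 := by simp [ssign]
private lemma ssign01 : ssign F 0 1 = 1 := by simp [ssign]
private lemma ssign10 : ssign F 1 0 = 1 := by simp [ssign]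
private lemma ssign11 : ssign F 1 1 = -1 := by rw [ssign, if_pos (by decide)]


private lemma ssign02 : ssign F 0 2 = 1 := by rw [ssign, if_neg (by decide)]
private lemma ssign20 : ssign F 2 0 = 1 := by rw [ssign, if_neg (by decide)]
private lemma ssign12 : ssign F 1 2 = 1 := by rw [ssign, if_neg (by decide)]
private lemma ssign21 : ssign F 2 1 = 1 := by rw [ssign, if_neg (by decide)]
private lemma ssign22 : ssign F 2 2 = 1 := by rw [ssign, if_neg (by decide)]

private lemma ssign_comm (i j : ZMod 2) : ssign F i j = ssign F j i := by
  rcases zc i with rfl | rfl <;> rcases zc j with rfl | rfl <;>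
    simp [ssign00, ssign01, ssign10, ssign11]

private lemma ssign_sq (i j : ZMod 2) : ssign F i j * ssign F i j = 1 := by
  rcases zc i with rfl | rfl <;> rcases zc j with rfl | rfl <;>
    norm_num [ssign00, ssign01, ssign10, ssign11]

private lemma ssign_add_right (i a j : ZMod 2) :
    ssign F i (a + j) = ssign F i a * ssign F i j := by
  rcases zc i with rfl | rfl <;> rcases zc a with rfl | rfl <;> rcases zc j with rfl | rfl <;>
    norm_num [ssign00, ssign01, ssign10, ssign11, ssign02, ssign20, ssign12, ssign21, ssign22, z2add]

private lemma ssign_add_left (i a j : ZMod 2) :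
    ssign F (i + a) j = ssign F i j * ssign F a j := by
  rcases zc i with rfl | rfl <;> rcases zc a with rfl | rfl <;> rcases zc j with rfl | rfl <;>
    norm_num [ssign00, ssign01, ssign10, ssign11, ssign02, ssign20, ssign12, ssign21, ssign22, z2add]

end signs


section helpers
variable (A : LieSuperAlg F L) {f : L → L}

private lemma br_zero_left (z : L) : A.br 0 z = 0 := by
  have := A.br_smul_left 0 0 z; simpa using this

private lemma br_zero_right (z : L) : A.br z 0 = 0 := by
  have := A.br_smul_right 0 z 0; simpa using this

private lemma br_neg_left (p q : L) : A.br (-p) q = -A.br p q := by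
  have := A.br_smul_left (-1) p q; simpa using this

private lemma br_neg_right (p q : L) : A.br p (-q) = -A.br p q := by
  have := A.br_smul_right (-1) p q; simpa using this

private lemma br_sub_left (p p' q : L) : A.br (p - p') q = A.br p q - A.br p' q := by
  rw [sub_eq_add_neg, A.br_add_left, br_neg_left, sub_eq_add_neg]

private lemma br_sub_right (p q q' : L) : A.br p (q - q') = A.br p q - A.br p q' := by
  rw [sub_eq_add_neg, A.br_add_right, br_neg_right, sub_eq_add_neg]

private lemma f_zero (hf : IsSuperCommuting A f) : f 0 = 0 := by
  have := hf.map_smul 0 0; simpa using this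

-- rearranged Jacobi
private lemma jacL {i j k : ZMod 2} {p q r : L} (hp : p ∈ A.G i) (hq : q ∈ A.G j)
    (hr : r ∈ A.G k) :
    A.br (A.br p q) r = A.br p (A.br q r) - ssign F i j • A.br q (A.br p r) := by
  rw [A.super_jacobi hp hq hr]; abel

private lemma L1 (hf : IsSuperCommuting A f) {i j k : ZMod 2} {p q r : L} (hp : p ∈ A.G i) (hq : q ∈ A.G j)
    (hr : r ∈ A.G k) :
    A.br (f (A.br p q)) r
      = A.br p (A.br (f q) r) - ssign F i j • A.br q (A.br (f p) r) := by
  rw [hf.comm (A.br p q) r, hf.comm q r, hf.comm p r]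
  rw [jacL A hp hq (hf.even hr)]

private lemma L2 (hf : IsSuperCommuting A f) {i j k : ZMod 2} {p q r : L} (hp : p ∈ A.G i) (hq : q ∈ A.G j)
    (hr : r ∈ A.G k) :
    A.br (f p) (A.br q r)
      = A.br (A.br (f p) q) r + ssign F i j • A.br q (A.br (f p) r) :=
  A.super_jacobi (hf.even hp) hq hr

end helpers

/-- The key 4-linear expression. -/
private def Vex (A : LieSuperAlg F L) (f : L → L) (x y u v : L) : L :=
  A.br (A.br x y) (A.br (f u) v) - A.br (A.br (f x) y) (A.br u v)

section BD
variable (A : LieSuperAlg F L) {f : L → L}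

private lemma symBD (hf : IsSuperCommuting A f) {i j a b : ZMod 2} {x y u v : L}
    (hx : x ∈ A.G i) (hy : y ∈ A.G j) (hu : u ∈ A.G a) (hv : v ∈ A.G b) :
    ssign F a j • Vex A f x y u v
      = (ssign F i a * ssign F i j) • Vex A f u y x v := by
  have hfx := hf.even hx
  have hfu := hf.even hu
  have hxu : A.br x u ∈ A.G (i + a) := A.br_deg hx hu
  have hduy : A.br (f u) y ∈ A.G (a + j) := A.br_deg hfu hy
  have hdxy : A.br (f x) y ∈ A.G (i + j) := A.br_deg hfx hy
  have hduv : A.br (f u) v ∈ A.G (a + b) := A.br_deg hfu hv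
  have hdxv : A.br (f x) v ∈ A.G (i + b) := A.br_deg hfx hv
  have w1 : A.br (f (A.br x u)) (A.br y v)
      = A.br x (A.br (A.br (f u) y) v)
        + ssign F a j • A.br x (A.br y (A.br (f u) v))
        - ssign F i a • A.br u (A.br (A.br (f x) y) v)
        - ssign F i a • (ssign F i j • A.br u (A.br y (A.br (f x) v))) := by
    rw [L1 A hf hx hu (A.br_deg hy hv), L2 A hf hu hy hv, L2 A hf hx hy hv]
    simp only [A.br_add_right, A.br_smul_right]
    module
  have w2 : A.br (f (A.br x u)) (A.br y v)
      = A.br (A.br x (A.br (f u) y)) v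
        - ssign F i a • A.br (A.br u (A.br (f x) y)) v
        + (ssign F i j * ssign F a j) • A.br y (A.br x (A.br (f u) v))
        - (ssign F i j * ssign F a j) • (ssign F i a • A.br y (A.br u (A.br (f x) v))) := by
    rw [L2 A hf hxu hy hv, L1 A hf hx hu hy, L1 A hf hx hu hv, ssign_add_left]
    simp only [br_sub_left, br_sub_right, A.br_smul_left, A.br_smul_right]
    module
  have key := w1.symm.trans w2
  have C1 : A.br (A.br x (A.br (f u) y)) v
      = A.br x (A.br (A.br (f u) y) v)
        - (ssign F i a * ssign F i j) • A.br (A.br (f u) y) (A.br x v) := by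
    have h := jacL A hx hduy hv
    rw [ssign_add_right] at h
    exact h
  have C2 : A.br (A.br u (A.br (f x) y)) v
      = A.br u (A.br (A.br (f x) y) v)
        - (ssign F a i * ssign F a j) • A.br (A.br (f x) y) (A.br u v) := by
    have h := jacL A hu hdxy hv
    rw [ssign_add_right] at h
    exact h
  have C3 := A.super_jacobi hx hy hduv
  have C4 := A.super_jacobi hu hy hdxv
  rw [C1, C2] at key
  rw [C3, C4] at key
  have hT : (ssign F i a * (ssign F a i * ssign F a j))
        • A.br (A.br (f x) y) (A.br u v)
      = ssign F a j • A.br (A.br (f x) y) (A.br u v) := by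
    rw [ssign_comm a i, ← mul_assoc, ssign_sq, one_mul]
  simp only [Vex]
  linear_combination (norm := module) key + hT
end BD


section main
variable (A : LieSuperAlg F L) {f : L → L}

private lemma cancel_self (h2 : (2 : F) ≠ 0) {m : L} {c : F} (hc : c = -1) (hm : m = c • m) :
    m = 0 := by
  rw [hc] at hm
  have hadd : m + m = 0 := by nth_rewrite 1 [hm]; rw [neg_one_smul, neg_add_cancel]
  have h2m : (2 : F) • m = 0 := by rw [two_smul]; exact hadd
  have h3 := congrArg (fun z => (2 : F)⁻¹ • z) h2m
  simpa [smul_smul, inv_mul_cancel₀ h2] using h3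

private lemma sym1 (hf : IsSuperCommuting A f) {i j a b : ZMod 2} {x y u v : L}
    (hx : x ∈ A.G i) (hy : y ∈ A.G j) (hu : u ∈ A.G a) (hv : v ∈ A.G b) :
    Vex A f x y u v = (ssign F a j * (ssign F i a * ssign F i j)) • Vex A f u y x v := by
  have h := symBD A hf hx hy hu hv
  have h2 := congrArg (fun m => ssign F a j • m) h
  simp only [smul_smul] at h2
  rwa [ssign_sq, one_smul] at h2

private lemma sym3 (hf : IsSuperCommuting A f) {i j : ZMod 2} {x y : L}
    (hx : x ∈ A.G i) (hy : y ∈ A.G j) (u v : L) :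
    Vex A f y x u v = (-ssign F i j) • Vex A f x y u v := by
  simp only [Vex]
  rw [A.super_skew hy hx, A.super_skew (hf.even hy) hx, ← hf.comm x y, ssign_comm j i]
  simp only [br_neg_left, A.br_smul_left]
  module

private lemma Vzero (h2 : (2 : F) ≠ 0) (hf : IsSuperCommuting A f) {i j a b : ZMod 2}
    {x y u v : L} (hx : x ∈ A.G i) (hy : y ∈ A.G j) (hu : u ∈ A.G a) (hv : v ∈ A.G b) :
    Vex A f x y u v = 0 := by
  have h1 := sym1 A hf hx hy hu hv
  have e2 := sym3 A hf hy hu x v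
  have e3 := sym1 A hf hy hu hx hv
  have e4 := sym3 A hf hu hx y v
  have e5 := sym1 A hf hu hx hy hv
  have e6 := sym3 A hf hx hy u v
  rw [e2, e3, e4, e5, e6] at h1
  simp only [smul_smul] at h1
  refine cancel_self h2 ?_ h1
  rcases zc i with rfl | rfl <;> rcases zc j with rfl | rfl <;> rcases zc a with rfl | rfl <;>
    norm_num [ssign00, ssign01, ssign10, ssign11]

private lemma decomp (w : L) : ∃ w0 ∈ A.G 0, ∃ w1 ∈ A.G 1, w = w0 + w1 := by
  have h1 : iSup A.G = ⊤ := A.isInternal.submodule_iSup_eq_top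
  have h2 : A.G 0 ⊔ A.G 1 = ⊤ := by
    refine le_antisymm le_top ?_
    rw [← h1]
    refine iSup_le fun i => ?_
    rcases zc i with rfl | rfl
    · exact le_sup_left
    · exact le_sup_right
  have hw : w ∈ A.G 0 ⊔ A.G 1 := by rw [h2]; exact Submodule.mem_top
  rcases Submodule.mem_sup.mp hw with ⟨w0, h0, w1, h1', he⟩
  exact ⟨w0, h0, w1, h1', he.symm⟩

private lemma Vadd1 (hf : IsSuperCommuting A f) (x x' y u v : L) :
    Vex A f (x + x') y u v = Vex A f x y u v + Vex A f x' y u v := by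
  simp only [Vex, hf.map_add, A.br_add_left]; abel

private lemma Vadd2 (x y y' u v : L) :
    Vex A f x (y + y') u v = Vex A f x y u v + Vex A f x y' u v := by
  simp only [Vex, A.br_add_right, A.br_add_left]; abel

private lemma Vadd3 (hf : IsSuperCommuting A f) (x y u u' v : L) :
    Vex A f x y (u + u') v = Vex A f x y u v + Vex A f x y u' v := by
  simp only [Vex, hf.map_add, A.br_add_left, A.br_add_right]; abel

private lemma Vadd4 (x y u v v' : L) :
    Vex A f x y u (v + v') = Vex A f x y u v + Vex A f x y u v' := by
  simp only [Vex, A.br_add_right]; abel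

private lemma VzeroAll (h2 : (2 : F) ≠ 0) (hf : IsSuperCommuting A f) (x y u v : L) :
    Vex A f x y u v = 0 := by
  obtain ⟨x0, hx0, x1, hx1, rfl⟩ := decomp A x
  obtain ⟨y0, hy0, y1, hy1, rfl⟩ := decomp A y
  obtain ⟨u0, hu0, u1, hu1, rfl⟩ := decomp A u
  obtain ⟨v0, hv0, v1, hv1, rfl⟩ := decomp A v
  simp only [Vadd1 A hf, Vadd2 A, Vadd3 A hf, Vadd4 A]
  rw [Vzero A h2 hf hx0 hy0 hu0 hv0, Vzero A h2 hf hx0 hy0 hu0 hv1,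
      Vzero A h2 hf hx0 hy0 hu1 hv0, Vzero A h2 hf hx0 hy0 hu1 hv1,
      Vzero A h2 hf hx0 hy1 hu0 hv0, Vzero A h2 hf hx0 hy1 hu0 hv1,
      Vzero A h2 hf hx0 hy1 hu1 hv0, Vzero A h2 hf hx0 hy1 hu1 hv1,
      Vzero A h2 hf hx1 hy0 hu0 hv0, Vzero A h2 hf hx1 hy0 hu0 hv1,
      Vzero A h2 hf hx1 hy0 hu1 hv0, Vzero A h2 hf hx1 hy0 hu1 hv1,
      Vzero A h2 hf hx1 hy1 hu0 hv0, Vzero A h2 hf hx1 hy1 hu0 hv1,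
      Vzero A h2 hf hx1 hy1 hu1 hv0, Vzero A h2 hf hx1 hy1 hu1 hv1]
  simp

private lemma Icomm (h2 : (2 : F) ≠ 0) (hf : IsSuperCommuting A f) (u v p q : L) :
    A.br (A.br u v) (A.br (f p) q) = A.br (A.br (f u) v) (A.br p q) := by
  have h := VzeroAll A h2 hf u v p q
  simp only [Vex] at h
  exact sub_eq_zero.mp h

private lemma vanish (hcent : ∀ v : L, (∀ p ∈ derived A, A.br p v = 0) → v = 0) (c : L)
    (hc : ∀ u v : L, A.br (A.br u v) c = 0) : c = 0 := by
  apply hcent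
  intro p hp
  clear hcent
  have hp' : p ∈ Submodule.span F {z : L | ∃ x y : L, z = A.br x y} := hp
  clear hp
  induction hp' using Submodule.span_induction with
  | mem z hz => obtain ⟨u, v, rfl⟩ := hz; exact hc u v
  | zero => exact br_zero_left A c
  | add p q _ _ hp hq => rw [A.br_add_left, hp, hq, add_zero]
  | smul t p _ hp => rw [A.br_smul_left, hp, smul_zero]

end main

private def GamE (A : LieSuperAlg F L) (f : L → L) (x y : L) : L :=
  f (A.br x y) - A.br x (f y)

section gamma
variable (A : LieSuperAlg F L) {f : L → L}

private lemma f_neg (hf : IsSuperCommuting A f) (w : L) : f (-w) = -f w := by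
  have := hf.map_smul (-1) w; simpa using this

private lemma Gmem (hf : IsSuperCommuting A f) {i j : ZMod 2} {x y : L}
    (hx : x ∈ A.G i) (hy : y ∈ A.G j) : GamE A f x y ∈ A.G (i + j) :=
  Submodule.sub_mem _ (hf.even (A.br_deg hx hy)) (A.br_deg hx (hf.even hy))

private lemma Gskew (hf : IsSuperCommuting A f) {i j : ZMod 2} {x y : L}
    (hx : x ∈ A.G i) (hy : y ∈ A.G j) :
    GamE A f y x = (-ssign F i j) • GamE A f x y := by
  simp only [GamE]
  rw [A.super_skew hy hx, A.super_skew hy (hf.even hx), hf.comm x y, ssign_comm j i]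
  have hfs : f (-(ssign F i j • A.br x y)) = -(ssign F i j • f (A.br x y)) := by
    rw [f_neg A hf, hf.map_smul]
  rw [hfs]
  module

private lemma Rlem (hf : IsSuperCommuting A f) {i j k : ZMod 2} {x y z : L}
    (hx : x ∈ A.G i) (hy : y ∈ A.G j) (hz : z ∈ A.G k) :
    A.br (GamE A f x y) z = ssign F i j • A.br y (GamE A f x z) := by
  simp only [GamE]
  rw [br_sub_left, hf.comm (A.br x y) z, jacL A hx hy (hf.even hz),
      jacL A hx (hf.even hy) hz, hf.comm y z, hf.comm y (A.br x z)]
  simp only [br_sub_right]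
  module

private lemma R2lem (h2 : (2 : F) ≠ 0)
    (hcent : ∀ v : L, (∀ p ∈ derived A, A.br p v = 0) → v = 0)
    (hf : IsSuperCommuting A f) {i j k : ZMod 2} {x y z : L}
    (hx : x ∈ A.G i) (hy : y ∈ A.G j) (hz : z ∈ A.G k) :
    A.br x (GamE A f y z) = ssign F i j • A.br y (GamE A f x z) := by
  have hjac : A.br (A.br x y) z - A.br x (A.br y z) + ssign F i j • A.br y (A.br x z) = 0 := by
    rw [A.super_jacobi hx hy hz]; abel
  set J2 := A.br (f (A.br x y)) z - A.br (f x) (A.br y z)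
      + ssign F i j • A.br (f y) (A.br x z) with hJ2def
  have hJ2z : ∀ u v : L, A.br (A.br u v) J2 = 0 := by
    intro u v
    rw [hJ2def]
    simp only [br_sub_right, A.br_add_right, A.br_smul_right]
    rw [Icomm A h2 hf u v (A.br x y) z, Icomm A h2 hf u v x (A.br y z),
        Icomm A h2 hf u v y (A.br x z)]
    rw [← br_sub_right, ← A.br_smul_right, ← A.br_add_right, hjac, br_zero_right]
  have hJ2 : J2 = 0 := vanish A hcent J2 hJ2z
  have hpt : J2 = -A.br x (GamE A f y z) + ssign F i j • A.br y (GamE A f x z) := by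
    rw [hJ2def]
    simp only [GamE]
    rw [hf.comm (A.br x y) z, jacL A hx hy (hf.even hz), hf.comm x (A.br y z),
        hf.comm y (A.br x z)]
    simp only [br_sub_right]
    module
  rw [hJ2] at hpt
  linear_combination (norm := module) hpt

private lemma Gzero (h2 : (2 : F) ≠ 0)
    (hcent : ∀ v : L, (∀ p ∈ derived A, A.br p v = 0) → v = 0)
    (hf : IsSuperCommuting A f) {i j : ZMod 2} {x y : L}
    (hx : x ∈ A.G i) (hy : y ∈ A.G j) : GamE A f x y = 0 := by
  have hGxy_mem : GamE A f x y ∈ A.G (i + j) := Gmem A hf hx hy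
  have hGyzbr : ∀ (k : ZMod 2) (z : L), z ∈ A.G k → A.br (GamE A f x y) z = 0 := by
    intro k z hz
    have hR := Rlem A hf hx hy hz
    have hR2 := R2lem A h2 hcent hf hx hy hz
    have hR3 : A.br (GamE A f x y) z = A.br x (GamE A f y z) := by rw [hR, hR2]
    have hGyz_mem : GamE A f y z ∈ A.G (j + k) := Gmem A hf hy hz
    have e1 := A.super_skew hx hGyz_mem
    have e2 := Rlem A hf hy hz hx
    have e3 := Gskew A hf hx hy
    have e4 := A.super_skew hz hGxy_mem
    have hchain : A.br (GamE A f x y) z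
        = (-(ssign F i (j + k) * (ssign F j k * (ssign F i j * ssign F k (i + j)))))
            • A.br (GamE A f x y) z := by
      calc A.br (GamE A f x y) z = A.br x (GamE A f y z) := hR3
        _ = -(ssign F i (j + k) • A.br (GamE A f y z) x) := e1
        _ = _ := by rw [e2, e3, A.br_smul_right, e4]; module
    refine cancel_self h2 ?_ hchain
    rcases zc i with rfl | rfl <;> rcases zc j with rfl | rfl <;> rcases zc k with rfl | rfl <;>
      norm_num [ssign00, ssign01, ssign10, ssign11, ssign02, ssign20, ssign12, ssign21,
        ssign22, z2add]
  have hz_all : ∀ z : L, A.br (GamE A f x y) z = 0 := by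
    intro z
    obtain ⟨z0, h0, z1, h1', rfl⟩ := decomp A z
    rw [A.br_add_right, hGyzbr 0 z0 h0, hGyzbr 1 z1 h1', add_zero]
  have hleft : ∀ w : L, A.br w (GamE A f x y) = 0 := by
    intro w
    obtain ⟨w0, h0, w1, h1', rfl⟩ := decomp A w
    have l0 : A.br w0 (GamE A f x y) = 0 := by
      rw [A.super_skew h0 hGxy_mem, hz_all, smul_zero, neg_zero]
    have l1 : A.br w1 (GamE A f x y) = 0 := by
      rw [A.super_skew h1' hGxy_mem, hz_all, smul_zero, neg_zero]
    rw [A.br_add_left, l0, l1, add_zero]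
  exact vanish A hcent _ (fun u v => hleft (A.br u v))

end gamma


theorem stmt10 (h2 : (2 : F) ≠ 0) (A : LieSuperAlg F L)
    (hperf : derived A = ⊤)
    (hcent : ∀ v : L, (∀ p ∈ derived A, A.br p v = 0) → v = 0)
    (f : L → L) (hf : IsSuperCommuting A f) :
    ∀ x y : L, f (A.br x y) = A.br x (f y) := by
  intro x y
  obtain ⟨x0, hx0, x1, hx1, rfl⟩ := decomp A x
  obtain ⟨y0, hy0, y1, hy1, rfl⟩ := decomp A y
  have e00 : f (A.br x0 y0) = A.br x0 (f y0) := by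
    have := Gzero A h2 hcent hf hx0 hy0; simpa [GamE, sub_eq_zero] using this
  have e01 : f (A.br x0 y1) = A.br x0 (f y1) := by
    have := Gzero A h2 hcent hf hx0 hy1; simpa [GamE, sub_eq_zero] using this
  have e10 : f (A.br x1 y0) = A.br x1 (f y0) := by
    have := Gzero A h2 hcent hf hx1 hy0; simpa [GamE, sub_eq_zero] using this
  have e11 : f (A.br x1 y1) = A.br x1 (f y1) := by
    have := Gzero A h2 hcent hf hx1 hy1; simpa [GamE, sub_eq_zero] using this
  rw [hf.map_add y0 y1]
  rw [A.br_add_left x0 x1 (y0 + y1), A.br_add_left x0 x1 (f y0 + f y1)]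
  rw [A.br_add_right x0 y0 y1, A.br_add_right x1 y0 y1,
      A.br_add_right x0 (f y0) (f y1), A.br_add_right x1 (f y0) (f y1)]
  rw [hf.map_add, hf.map_add, hf.map_add]
  rw [e00, e01, e10, e11]
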